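/- Let n ≥ 2 be an integer, α > 0, p ∈ {1,…,n−1} coprime to n, and let g be a type (i) coupling satisfying the quantisation condition M ∈ ℤ ∖ {0}. Assume in addition that g does not belong to the finite set {(1 − sgn(M)·A + B·(2π/α))/C : A ∈ {0,1,…,|M|}, B ∈ {0,1,…,p−1}, C ∈ {1,…,n−1}}. Then for every r ∈ {1,…,n−1}, every ν ∈ S_n(ω_r), and every μ ∈ Λ⁺_{p,|M|} with μ+ν ∉ Λ⁺_{p,|M|}: all sine denominators occurring in V_ν(g; −ρ_p−sgn(M)(μ+ν)) are nonzero, so that this value is a finite real number. -/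

import Mathlib

noncomputable section
open Real Finset
open scoped Classical

/-- The standard basis vector `e_j` of `ℝⁿ` (1-based index), extended `n`-periodically
(`e_{n+j} = e_j`). -/
def ee (n j : ℕ) : Fin n → ℝ := fun i => if ((i : ℕ) + 1) % n = j % n then 1 else 0

/-- The standard inner product on `ℝⁿ`. -/
def inn {n : ℕ} (x y : Fin n → ℝ) : ℝ := ∑ i, x i * y i

/-- The coordinate `x_j` (1-based index) with the convention `x_{n+k} = x_k - 2π/α`. -/
def coord {n : ℕ} (α : ℝ) (x : Fin n → ℝ) (j : ℕ) : ℝ :=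
  if h : 0 < n then x ⟨(j - 1) % n, Nat.mod_lt _ h⟩ - 2 * π / α * (((j - 1) / n : ℕ) : ℝ)
  else 0

/-- The simple roots `a_{j,p} = e_j - e_{j+p}`. -/
def aa (n p j : ℕ) : Fin n → ℝ := ee n j - ee n (j + p)

/-- The closed simplex `Σ̄_{g,p} = {x ∈ E_n : sgn(M)(x_j - x_{j+p} - g) ≥ 0, j = 1,…,n}`,
where `M = 2πp/α - ng`. -/
def SigmaBar (n p : ℕ) (α g : ℝ) : Set (Fin n → ℝ) :=
  {x | (∑ i, x i) = 0 ∧ ∀ j ∈ Icc 1 n,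
    0 ≤ Real.sign (2 * π * p / α - n * g) * (coord α x j - coord α x (j + p) - g)}

/-- The interior `Σ_{g,p}` of the simplex, cut out by the strict inequalities. -/
def SigmaInt (n p : ℕ) (α g : ℝ) : Set (Fin n → ℝ) :=
  {x | (∑ i, x i) = 0 ∧ ∀ j ∈ Icc 1 n,
    0 < Real.sign (2 * π * p / α - n * g) * (coord α x j - coord α x (j + p) - g)}

/-- `g` is a type (i) coupling, with `q ∈ {1,…,n-1}` the multiplicative inverse of `p` mod `n`. -/
def TypeI (n p q : ℕ) (α g : ℝ) : Prop :=
  1 ≤ q ∧ q ≤ n - 1 ∧ (p * q) % n = 1 % n ∧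
  ((2 * π / α * ((p : ℝ) / n - 1 / ((n : ℝ) * q)) < g ∧ g < 2 * π / α * ((p : ℝ) / n)) ∨
   (2 * π / α * ((p : ℝ) / n) < g ∧
      g < 2 * π / α * ((p : ℝ) / n + 1 / ((n : ℝ) * ((n : ℝ) - q)))))

/-- `ρ_p = g(ω_{1,p}+…+ω_{n-p,p}) + (g - 2π/α)(ω_{n-p+1,p}+…+ω_{n-1,p})`. -/
def rhoP (n p : ℕ) (α g : ℝ) (ω : ℕ → Fin n → ℝ) : Fin n → ℝ :=
  g • (∑ j ∈ Icc 1 (n - p), ω j) + (g - 2 * π / α) • (∑ j ∈ Icc (n - p + 1) (n - 1), ω j)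

/-- `Λ⁺_{p,|M|}`: nonnegative integral combinations of the `ω_{j,p}` with coefficient sum `≤ |M|`. -/
def Lam (n : ℕ) (Mabs : ℝ) (ω : ℕ → Fin n → ℝ) : Set (Fin n → ℝ) :=
  {μ | ∃ m : ℕ → ℕ, (∑ j ∈ Icc 1 (n - 1), (m j : ℝ)) ≤ Mabs ∧
    μ = ∑ j ∈ Icc 1 (n - 1), (m j : ℝ) • ω j}

/-- The fundamental weight `ω_r = e_1+…+e_r - (r/n)(e_1+…+e_n)`. -/
def omegaStd (n r : ℕ) : Fin n → ℝ :=
  fun i => (if (i : ℕ) + 1 ≤ r then 1 else 0) - (r : ℝ) / n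

/-- Membership in the orbit `S_n(ω_r)` of `ω_r` under coordinate permutations. -/
def inOrbit (n r : ℕ) (ν : Fin n → ℝ) : Prop :=
  ∃ σ : Equiv.Perm (Fin n), ν = fun i => omegaStd n r (σ i)

/-- The orbit `S_n(ω_r)` as a finite set. -/
def orbitF (n r : ℕ) : Finset (Fin n → ℝ) :=
  Finset.image (fun σ : Equiv.Perm (Fin n) => fun i => omegaStd n r (σ i)) Finset.univ

/-- `V_ν(g;x) = ∏_{a ∈ A_{n-1}, ⟨a,ν⟩=1} sin(α(⟨a,x⟩+g)/2)/sin(α⟨a,x⟩/2)`. -/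
def Vnu (n : ℕ) (α g : ℝ) (ν x : Fin n → ℝ) : ℝ :=
  ∏ j ∈ Icc 1 n, ∏ k ∈ Icc 1 n,
    if j ≠ k ∧ inn (ee n j - ee n k) ν = 1 then
      Real.sin (α * (inn (ee n j - ee n k) x + g) / 2) /
        Real.sin (α * inn (ee n j - ee n k) x / 2)
    else 1

/-- `V_J(g;x) = ∏_{j∈J, k∉J} sin(α(x_j-x_k+g)/2)/sin(α(x_j-x_k)/2)`. -/
def VJ (n : ℕ) (α g : ℝ) (J : Finset ℕ) (x : Fin n → ℝ) : ℝ :=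
  ∏ j ∈ J, ∏ k ∈ Icc 1 n \ J,
    Real.sin (α * (coord α x j - coord α x k + g) / 2) /
      Real.sin (α * (coord α x j - coord α x k) / 2)

/-- `F_J(g;x) = ∏_{j,k∈J, j≠k} sin(α(x_j-x_k)/2)/sin(α(x_j-x_k+g)/2)`. -/
def FJ (n : ℕ) (α g : ℝ) (J : Finset ℕ) (x : Fin n → ℝ) : ℝ :=
  ∏ j ∈ J, ∏ k ∈ J,
    if j ≠ k then
      Real.sin (α * (coord α x j - coord α x k) / 2) /
        Real.sin (α * (coord α x j - coord α x k + g) / 2)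
    else 1

/-- The trigonometric Pochhammer symbol `(z : sin_α)_m`. -/
def poch (α z : ℝ) (m : ℤ) : ℝ :=
  if 0 ≤ m then ∏ l ∈ Finset.range m.toNat, Real.sin (α * (z + l) / 2)
  else 1 / ∏ l ∈ Finset.Icc 1 (-m).toNat, Real.sin (α * (z - l) / 2)

/-- Membership in the set of positive roots `A⁺_{n-1,p}`. -/
def inPosRoots (n p : ℕ) (v : Fin n → ℝ) : Prop :=
  (∃ j ∈ Icc 1 n, ∃ k ∈ Icc 1 n, j ≠ k ∧ v = ee n j - ee n k) ∧
  ∃ c : ℕ → ℕ, v = ∑ j ∈ Icc 1 (n - 1), (c j : ℝ) • aa n p j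

/-- The lattice function `Δ_p(μ)`. -/
def Delta (n p : ℕ) (α g : ℝ) (ω : ℕ → Fin n → ℝ) (μ : Fin n → ℝ) : ℝ :=
  ∏ j ∈ Icc 1 n, ∏ k ∈ Icc 1 n,
    if inPosRoots n p (ee n j - ee n k) then
      Real.sin (α * inn (ee n j - ee n k)
          (rhoP n p α g ω + Real.sign (2 * π * p / α - n * g) • μ) / 2) /
        Real.sin (α * inn (ee n j - ee n k) (rhoP n p α g ω) / 2) *
      (poch α (inn (ee n j - ee n k) (rhoP n p α g ω) +
            Real.sign (2 * π * p / α - n * g) * g)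
          ⌊Real.sign (2 * π * p / α - n * g) * inn (ee n j - ee n k) μ⌋ /
        poch α (inn (ee n j - ee n k) (rhoP n p α g ω) + 1 -
            Real.sign (2 * π * p / α - n * g) * g)
          ⌊Real.sign (2 * π * p / α - n * g) * inn (ee n j - ee n k) μ⌋)
    else 1

/-- The coefficient `W_ν(ρ_p + sgn(M)μ)` (equal to `0` when `μ + ν ∉ Λ⁺_{p,|M|}`). -/
def Wmu (n p : ℕ) (α g : ℝ) (ω : ℕ → Fin n → ℝ) (s : (Fin n → ℝ) → ℝ)
    (μ ν : Fin n → ℝ) : ℝ :=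
  if μ + ν ∈ Lam n |2 * π * p / α - n * g| ω then
    s ν * Real.sqrt
      (Vnu n α g ν (rhoP n p α g ω + Real.sign (2 * π * p / α - n * g) • μ) *
       Vnu n α g ν (-(rhoP n p α g ω) - Real.sign (2 * π * p / α - n * g) • (μ + ν)))
  else 0

/-- The discrete difference operator `Ŝ_{r,M}` acting on lattice functions. -/
def SOp (n p r : ℕ) (α g : ℝ) (ω : ℕ → Fin n → ℝ) (s : (Fin n → ℝ) → ℝ)
    (φ : (Fin n → ℝ) → ℂ) : (Fin n → ℝ) → ℂ :=
  fun x => ∑ ν ∈ orbitF n r,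
    (Wmu n p α g ω s (Real.sign (2 * π * p / α - n * g) • (x - rhoP n p α g ω)) ν : ℂ) *
      φ (x + Real.sign (2 * π * p / α - n * g) • ν)

/-- The inner product `(φ, ψ)_{p,M}` on lattice functions. -/
def ip (n p : ℕ) (α g : ℝ) (ω : ℕ → Fin n → ℝ) (φ ψ : (Fin n → ℝ) → ℂ) : ℂ :=
  ∑ᶠ μ ∈ Lam n |2 * π * p / α - n * g| ω,
    φ (rhoP n p α g ω + Real.sign (2 * π * p / α - n * g) • μ) *
      starRingEnd ℂ (ψ (rhoP n p α g ω + Real.sign (2 * π * p / α - n * g) • μ))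

/-- The elementary symmetric function `ℰ_r(u) = Σ_{ν ∈ S_n(ω_r)} exp(iα⟨ν,u⟩)`. -/
def calE (n r : ℕ) (α : ℝ) (u : Fin n → ℝ) : ℂ :=
  ∑ ν ∈ orbitF n r, Complex.exp (Complex.I * (α : ℂ) * (inn ν u : ℂ))


/-!
Since `p` is invertible mod `n`, every root `e_j - e_k` equals `±∑_{l ∈ S} a_{l,p}` for some
nonempty `S ⊆ {1,…,n-1}`: walk from `j` to `k` in steps of `p`, and if the walk passes through `n`
use the complementary walk instead, as `∑_{l=1}^{n} a_{l,p} = 0`. Pairing with the dual basis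
`ω_{c,p}` turns the vanishing of `sin(α⟨a, -ρ_p - sgn(M)(μ+ν)⟩/2)` into an identity
`g·C = ±1 - sgn(M)·A + (2π/α)·B` with `C = |S|`, `0 ≤ A ≤ |M|` and `B ∈ ℤ`. When the sign is `-1`,
the substitution `(C, A, B) ↦ (n - C, |M| - A, p - B)` together with `ng = 2πp/α - M` gives the `+1`
form. The type (i) window reads `0 < M < (2π/α)/q` or `0 < -M < (2π/α)/(n-q)`; eliminating `g`, it
forces `0 ≤ B ≤ p - 1`, so `g` is one of the excluded values.
-/

lemma inn_eq_dotProduct {n : ℕ} (x y : Fin n → ℝ) : inn x y = x ⬝ᵥ y := rfl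

lemma inn_sum_left {n : ℕ} {ι : Type*} (s : Finset ι) (f : ι → Fin n → ℝ) (y : Fin n → ℝ) :
    inn (∑ i ∈ s, f i) y = ∑ i ∈ s, inn (f i) y :=
  sum_dotProduct s f y

lemma inn_sum_right {n : ℕ} {ι : Type*} (x : Fin n → ℝ) (s : Finset ι) (f : ι → Fin n → ℝ) :
    inn x (∑ i ∈ s, f i) = ∑ i ∈ s, inn x (f i) :=
  dotProduct_sum x s f

lemma inn_smul_left {n : ℕ} (c : ℝ) (x y : Fin n → ℝ) : inn (c • x) y = c * inn x y :=
  smul_dotProduct c x y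

lemma inn_smul_right {n : ℕ} (c : ℝ) (x y : Fin n → ℝ) : inn x (c • y) = c * inn x y :=
  dotProduct_smul c x y

lemma inn_add_right {n : ℕ} (x y z : Fin n → ℝ) : inn x (y + z) = inn x y + inn x z :=
  dotProduct_add x y z

lemma inn_sub_right {n : ℕ} (x y z : Fin n → ℝ) : inn x (y - z) = inn x y - inn x z :=
  dotProduct_sub x y z

lemma inn_neg_right {n : ℕ} (x y : Fin n → ℝ) : inn x (-y) = -inn x y :=
  dotProduct_neg x y

lemma ee_congr {n a b : ℕ} (h : a ≡ b [MOD n]) : ee n a = ee n b := by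
  unfold ee
  rw [h]

lemma aa_congr {n p a b : ℕ} (h : a ≡ b [MOD n]) : aa n p a = aa n p b := by
  unfold aa
  rw [ee_congr h, ee_congr (h.add_right p)]

lemma sum_range_comp_add_of_periodic {M : Type*} [AddCancelCommMonoid M] {f : ℕ → M} {n : ℕ}
    (hf : ∀ x, f (x + n) = f x) (c : ℕ) :
    ∑ l ∈ range n, f (l + c) = ∑ l ∈ range n, f l := by
  induction c with
  | zero => rfl
  | succ c ih =>
    have h := sum_range_succ (fun l => f (l + c)) n
    rw [sum_range_succ', zero_add, add_comm n c, hf, add_left_inj, ih] at h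
    rw [← h]
    exact sum_congr rfl fun l _ => by rw [← add_assoc, add_right_comm]

lemma sum_range_aa (n p : ℕ) : ∑ l ∈ range n, aa n p l = 0 := by
  have hper : ∀ x, ee n (x + n) = ee n x := fun x => ee_congr (Nat.add_mod_right x n)
  simp only [aa, sum_sub_distrib, sum_range_comp_add_of_periodic hper, sub_self]

lemma ee_sub_ee_add_mul_eq_sum_aa (n p j T : ℕ) :
    ee n j - ee n (j + T * p) = ∑ t ∈ range T, aa n p (j + t * p) := by
  have h := sum_range_sub' (fun t => ee n (j + t * p)) T
  rw [zero_mul, add_zero] at h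
  rw [← h]
  exact sum_congr rfl fun t _ => by rw [aa, add_one_mul, add_assoc]

lemma exists_add_mul_modEq {n p : ℕ} (hn : 0 < n) (hcop : p.Coprime n) (j k : ℕ) :
    ∃ T < n, j + T * p ≡ k [MOD n] := by
  have : NeZero n := ⟨hn.ne'⟩
  set u : ZMod n := ((k : ZMod n) - j) * (p : ZMod n)⁻¹
  refine ⟨u.val, ZMod.val_lt u, (ZMod.natCast_eq_natCast_iff _ _ _).1 ?_⟩
  rw [Nat.cast_add, Nat.cast_mul, ZMod.natCast_zmod_val, mul_assoc,
    mul_comm _ (p : ZMod n), ZMod.coe_mul_inv_eq_one p hcop, mul_one, add_sub_cancel]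

lemma exists_sub_ee_eq_sum_aa {n p : ℕ} (hn : 0 < n) (hcop : p.Coprime n) (j k : ℕ) :
    ∃ S ⊆ range n, ee n j - ee n k = ∑ l ∈ S, aa n p l := by
  obtain ⟨T, hTn, hT⟩ := exists_add_mul_modEq hn hcop j k
  have hinj : Set.InjOn (fun t => (j + t * p) % n) (range T) := fun t ht t' ht' h =>
    ((Nat.ModEq.add_left_cancel' j h).cancel_right_of_coprime
      (Nat.coprime_comm.1 hcop)).eq_of_lt_of_lt ((mem_range.1 ht).trans hTn)
        ((mem_range.1 ht').trans hTn)
  refine ⟨(range T).image fun t => (j + t * p) % n,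
    image_subset_iff.2 fun t _ => mem_range.2 (Nat.mod_lt _ hn), ?_⟩
  rw [sum_image hinj, ← ee_congr hT, ee_sub_ee_add_mul_eq_sum_aa]
  exact sum_congr rfl fun t _ => aa_congr (Nat.mod_modEq _ _).symm

lemma exists_sub_ee_eq_smul_sum_aa {n p : ℕ} (hn : 0 < n) (hcop : p.Coprime n) (j k : ℕ) :
    ∃ τ : ℤ, (τ = 1 ∨ τ = -1) ∧
      ∃ S ⊆ Icc 1 (n - 1), ee n j - ee n k = (τ : ℝ) • ∑ l ∈ S, aa n p l := by
  obtain ⟨S, hS, h⟩ := exists_sub_ee_eq_sum_aa hn hcop j k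
  have hIcc : ∀ S' ⊆ range n, 0 ∉ S' → S' ⊆ Icc 1 (n - 1) := fun S' hS' h0 l hl => by
    have hln := mem_range.1 (hS' hl)
    have hl0 : l ≠ 0 := fun h => h0 (h ▸ hl)
    rw [mem_Icc]
    omega
  by_cases h0 : 0 ∈ S
  · refine ⟨-1, Or.inr rfl, range n \ S, hIcc _ sdiff_subset (by simp [h0]), ?_⟩
    have hsum := sum_sdiff hS (f := aa n p)
    rw [sum_range_aa] at hsum
    rw [h, Int.cast_neg, Int.cast_one, neg_one_smul, eq_neg_iff_add_eq_zero, add_comm, hsum]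
  · exact ⟨1, Or.inl rfl, S, hIcc S hS h0, by rw [h, Int.cast_one, one_smul]⟩

def IsFundamentalWeights (n p : ℕ) (ω : ℕ → Fin n → ℝ) : Prop :=
  ∀ j : ℕ, 1 ≤ j → j ≤ n - 1 → ∀ k : ℕ, 1 ≤ k → k ≤ n - 1 →
    inn (aa n p j) (ω k) = if j = k then (1 : ℝ) else 0

section Pairing

variable {n p : ℕ} {ω : ℕ → Fin n → ℝ} {S : Finset ℕ}

lemma inn_sum_aa_omega (hω : IsFundamentalWeights n p ω) (hS : S ⊆ Icc 1 (n - 1)) {c : ℕ}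
    (hc : c ∈ Icc 1 (n - 1)) : inn (∑ l ∈ S, aa n p l) (ω c) = if c ∈ S then 1 else 0 := by
  rw [mem_Icc] at hc
  rw [inn_sum_left, sum_congr rfl fun l hl =>
    hω l (mem_Icc.1 (hS hl)).1 (mem_Icc.1 (hS hl)).2 c hc.1 hc.2]
  exact sum_ite_eq' S c fun _ => 1

lemma inn_sum_aa_sum_smul_omega (hω : IsFundamentalWeights n p ω) (hS : S ⊆ Icc 1 (n - 1))
    {I : Finset ℕ} (hI : I ⊆ Icc 1 (n - 1)) (f : ℕ → ℝ) :
    inn (∑ l ∈ S, aa n p l) (∑ c ∈ I, f c • ω c) = ∑ c ∈ I ∩ S, f c := by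
  rw [inn_sum_right, ← sum_ite_mem]
  refine sum_congr rfl fun c hc => ?_
  rw [inn_smul_right, inn_sum_aa_omega hω hS (hI hc), mul_ite, mul_one, mul_zero]

lemma inn_sum_aa_rhoP (hω : IsFundamentalWeights n p ω) (hp : 1 ≤ p) (hS : S ⊆ Icc 1 (n - 1))
    (α g : ℝ) :
    inn (∑ l ∈ S, aa n p l) (rhoP n p α g ω) =
      g * #S - 2 * π / α * #(Icc (n - p + 1) (n - 1) ∩ S) := by
  have hhead : Icc 1 (n - p) ⊆ Icc 1 (n - 1) := Icc_subset_Icc_right (by omega)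
  have htail : Icc (n - p + 1) (n - 1) ⊆ Icc 1 (n - 1) := Icc_subset_Icc_left (by omega)
  have hcard : #(Icc 1 (n - p) ∩ S) + #(Icc (n - p + 1) (n - 1) ∩ S) = #S := by
    rw [← card_union_of_disjoint, ← union_inter_distrib_right, inter_eq_right.2]
    · refine hS.trans fun c hc => ?_
      simp only [mem_union, mem_Icc] at hc ⊢
      omega
    · exact disjoint_of_subset_left inter_subset_left
        (disjoint_of_subset_right inter_subset_left
          (disjoint_left.2 fun c hc hc' => by simp only [mem_Icc] at hc hc'; omega))
  rw [rhoP, inn_add_right, smul_sum, smul_sum, inn_sum_aa_sum_smul_omega hω hS hhead,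
    inn_sum_aa_sum_smul_omega hω hS htail, sum_const, sum_const, nsmul_eq_mul, nsmul_eq_mul,
    ← hcard]
  push_cast
  ring

lemma exists_inn_sum_aa_eq_of_mem_Lam (hω : IsFundamentalWeights n p ω)
    (hS : S ⊆ Icc 1 (n - 1)) {Mabs : ℝ} {μ : Fin n → ℝ} (hμ : μ ∈ Lam n Mabs ω) :
    ∃ A : ℕ, (A : ℝ) ≤ Mabs ∧ inn (∑ l ∈ S, aa n p l) μ = A := by
  obtain ⟨m, hm, rfl⟩ := hμ
  refine ⟨∑ c ∈ S, m c, le_trans ?_ hm, ?_⟩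
  · exact_mod_cast sum_le_sum_of_subset hS
  · rw [inn_sum_aa_sum_smul_omega hω hS subset_rfl, inter_eq_right.2 hS, Nat.cast_sum]

end Pairing

lemma exists_int_eq_mul_of_sin_eq_zero {α y : ℝ} (hα : α ≠ 0) (h : Real.sin (α * y / 2) = 0) :
    ∃ m : ℤ, y = m * (2 * π / α) := by
  obtain ⟨m, hm⟩ := Real.sin_eq_zero_iff.1 h
  exact ⟨m, by field_simp; linarith⟩

lemma exists_relation_of_sin_eq_zero {n p : ℕ} {ω : ℕ → Fin n → ℝ} {S : Finset ℕ}
    {α g s : ℝ} {τ : ℤ} {A : ℕ} {a μ ν : Fin n → ℝ}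
    (hα : α ≠ 0) (hω : IsFundamentalWeights n p ω) (hp : 1 ≤ p) (hS : S ⊆ Icc 1 (n - 1))
    (hτ : τ = 1 ∨ τ = -1) (ha : a = (τ : ℝ) • ∑ l ∈ S, aa n p l)
    (hA : inn (∑ l ∈ S, aa n p l) μ = A) (haν : inn a ν = 1)
    (hsin : Real.sin (α * inn a (-(rhoP n p α g ω) - s • (μ + ν)) / 2) = 0) :
    ∃ B : ℤ, g * #S = -(s * τ) - s * A + 2 * π / α * B := by
  obtain ⟨m, hm⟩ := exists_int_eq_mul_of_sin_eq_zero hα hsin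
  rw [inn_sub_right, inn_neg_right, inn_smul_right, inn_add_right, haν, ha, inn_smul_left,
    inn_smul_left, inn_sum_aa_rhoP hω hp hS, hA] at hm
  have hτ2 : (τ : ℝ) * τ = 1 := by rcases hτ with rfl | rfl <;> norm_num
  refine ⟨#(Icc (n - p + 1) (n - 1) ∩ S) - τ * m, ?_⟩
  push_cast
  linear_combination (-τ : ℝ) * hm -
    (g * #S - 2 * π / α * #(Icc (n - p + 1) (n - 1) ∩ S) + s * A) * hτ2

lemma window_of_typeI {n p q : ℕ} {α g M : ℝ} (h : TypeI n p q α g)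
    (hM : 2 * π * p / α - n * g = M) :
    (0 < M ∧ q * M < 2 * π / α) ∨ (M < 0 ∧ (n - q) * -M < 2 * π / α) := by
  obtain ⟨hq1, hqn, -, h⟩ := h
  have hq : (0 : ℝ) < q := by exact_mod_cast hq1
  have hnq : (0 : ℝ) < n - q := sub_pos.2 (by exact_mod_cast (show q < n by omega))
  have hn : (0 : ℝ) < n := by linarith
  have hM' : M = 2 * π / α * p - n * g := by rw [← hM]; ring
  set β := 2 * π / α
  rcases h with ⟨h1, h2⟩ | ⟨h1, h2⟩
  · have e1 : n * (β * (p / n - 1 / (n * q))) = β * p - β / q := by field_simp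
    have e2 : n * (β * (p / n)) = β * p := by field_simp
    have h1 := mul_lt_mul_of_pos_left h1 hn
    have h2 := mul_lt_mul_of_pos_left h2 hn
    refine Or.inl ⟨by linarith, ?_⟩
    calc q * M < q * (β / q) := mul_lt_mul_of_pos_left (by linarith) hq
      _ = β := by field_simp
  · have e1 : n * (β * (p / n)) = β * p := by field_simp
    have e2 : n * (β * (p / n + 1 / (n * (n - q)))) = β * p + β / (n - q) := by field_simp
    have h1 := mul_lt_mul_of_pos_left h1 hn
    have h2 := mul_lt_mul_of_pos_left h2 hn
    refine Or.inr ⟨by linarith, ?_⟩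
    calc (n - q) * -M < (n - q) * (β / (n - q)) := mul_lt_mul_of_pos_left (by linarith) hnq
      _ = β := by field_simp

lemma sub_one_le_mul_sub_of_mul_modEq_one {n p q : ℕ} (hq : q ≤ n) (hpq : p * q ≡ 1 [MOD n]) :
    (n : ℝ) - 1 ≤ p * (n - q) := by
  have hdvd : (n : ℤ) ∣ p * (n - q) + 1 := by
    have h : (p : ℤ) * (n - q) + 1 = p * n + (((1 : ℕ) : ℤ) - (p * q : ℕ)) := by push_cast; ring
    rw [h]
    exact dvd_add (dvd_mul_left _ _) (Nat.modEq_iff_dvd.1 hpq)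
  have hpos : (0 : ℤ) < p * (n - q) + 1 := by
    have : (0 : ℤ) ≤ n - q := by omega
    positivity
  have h : ((n : ℤ) : ℝ) ≤ ((p * (n - q) + 1 : ℤ) : ℝ) := by
    exact_mod_cast Int.le_of_dvd hpos hdvd
  push_cast at h
  linarith

lemma coeff_bounds_of_pos {β M A C n p q B : ℝ} (hM : 1 ≤ M) (hqM : q * M < β) (hq : 1 ≤ q)
    (hp : 1 ≤ p) (hC : 0 ≤ C) (hCn : C + 1 ≤ n) (hA : 0 ≤ A) (hAM : A ≤ M)
    (h : β * (C * p - n * B) = n * (1 - A) + C * M) : -1 < B ∧ B < p := by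
  have hβ : 0 < β := by nlinarith
  have hβn : 0 < β * n := by nlinarith
  constructor
  · have h1 : q * M * (C * p + n) < β * (C * p + n) :=
      mul_lt_mul_of_pos_right hqM (by nlinarith)
    have h2 : n + C * M ≤ q * M * (C * p + n) :=
      calc n + C * M ≤ M * (C + n) := by nlinarith
        _ ≤ M * (C * p + n) := by gcongr; exact le_mul_of_one_le_right (by linarith) hp
        _ ≤ q * M * (C * p + n) := by
          rw [mul_assoc]
          exact le_mul_of_one_le_left (mul_nonneg (by linarith) (by nlinarith)) hq
    refine lt_of_mul_lt_mul_left ?_ hβn.le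
    nlinarith
  · have h1 : q * M * (p * (n - C)) < β * (p * (n - C)) :=
      mul_lt_mul_of_pos_right hqM (by nlinarith)
    have h2 : M * (n - C) ≤ q * M * (p * (n - C)) := by
      have hqp : 0 ≤ q * p - 1 := by nlinarith
      nlinarith [mul_nonneg hqp (mul_nonneg (by linarith : 0 ≤ M) (by linarith : 0 ≤ n - C))]
    refine lt_of_mul_lt_mul_left ?_ hβn.le
    nlinarith

lemma coeff_bounds_of_neg {β m A C n p q B : ℝ} (hm : 1 ≤ m) (hqm : (n - q) * m < β)
    (hpq : n - 1 ≤ p * (n - q)) (hqn : q + 1 ≤ n) (hC : 1 ≤ C) (hCn : C + 1 ≤ n) (hA : 0 ≤ A)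
    (hAm : A ≤ m) (h : β * (C * p - n * B) = n * (1 + A) - C * m) : -1 < B ∧ B < p := by
  have hβ : 0 < β := by nlinarith
  have hβn : 0 < β * n := by nlinarith
  have hp : 0 < p := by nlinarith
  constructor
  · have h1 : (n - q) * m * (C * p + n) < β * (C * p + n) :=
      mul_lt_mul_of_pos_right hqm (by nlinarith)
    have h2 : 2 * n - C ≤ (n - q) * (C * p + n) := by nlinarith
    refine lt_of_mul_lt_mul_left ?_ hβn.le
    nlinarith
  · have h1 : (n - q) * m * (p * (n - C)) < β * (p * (n - C)) :=
      mul_lt_mul_of_pos_right hqm (by nlinarith)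
    have h2 : C ≤ (n - q) * p * (n - C) := by nlinarith
    refine lt_of_mul_lt_mul_left ?_ hβn.le
    nlinarith

lemma natCast_le_abs_intCast_iff {A : ℕ} {M : ℤ} : (A : ℝ) ≤ |(M : ℝ)| ↔ A ≤ M.natAbs := by
  rw [← Int.cast_abs, Int.abs_eq_natAbs]
  exact Nat.cast_le

lemma coeff_bounds {β g : ℝ} {n p q A C : ℕ} {M B : ℤ}
    (hwin : (0 < (M : ℝ) ∧ q * (M : ℝ) < β) ∨ ((M : ℝ) < 0 ∧ (n - q) * -(M : ℝ) < β))
    (hng : n * g = β * p - M) (hp : 1 ≤ p) (hq1 : 1 ≤ q) (hqn : q < n)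
    (hpq : p * q ≡ 1 [MOD n]) (hC1 : 1 ≤ C) (hCn : C < n) (hA : A ≤ M.natAbs)
    (h : g * C = 1 - Real.sign M * A + β * B) : 0 ≤ B ∧ B ≤ p - 1 := by
  have hkey : β * (C * p - n * B) = n * (1 - Real.sign M * A) + C * M := by
    linear_combination (n : ℝ) * h - C * hng
  have hA' : (A : ℝ) ≤ |(M : ℝ)| := natCast_le_abs_intCast_iff.2 hA
  have hC1' : (1 : ℝ) ≤ C := by exact_mod_cast hC1
  have hCn' : (C : ℝ) + 1 ≤ n := by exact_mod_cast hCn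
  suffices hB : (-1 : ℝ) < B ∧ (B : ℝ) < p by
    have h1 : (-1 : ℤ) < B := by exact_mod_cast hB.1
    have h2 : B < (p : ℤ) := by exact_mod_cast hB.2
    omega
  rcases hwin with ⟨hM, hqM⟩ | ⟨hM, hqM⟩
  · rw [Real.sign_of_pos hM, one_mul] at hkey
    rw [abs_of_pos hM] at hA'
    have hM1 : (1 : ℝ) ≤ M := by
      have : 0 < M := by exact_mod_cast hM
      exact_mod_cast (show (1 : ℤ) ≤ M by omega)
    exact coeff_bounds_of_pos hM1 hqM (by exact_mod_cast hq1) (by exact_mod_cast hp)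
      (Nat.cast_nonneg C) hCn' (Nat.cast_nonneg A) hA' hkey
  · rw [Real.sign_of_neg hM] at hkey
    rw [abs_of_neg hM] at hA'
    have hM1 : (1 : ℝ) ≤ -M := by
      have : M < 0 := by exact_mod_cast hM
      exact_mod_cast (show (1 : ℤ) ≤ -M by omega)
    exact coeff_bounds_of_neg hM1 hqM (sub_one_le_mul_sub_of_mul_modEq_one hqn.le hpq)
      (by exact_mod_cast hqn) hC1' hCn' (Nat.cast_nonneg A) hA' (by linear_combination hkey)

lemma exists_excluded_of_eq_one_sub {β g : ℝ} {n p q A C : ℕ} {M B : ℤ}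
    (hwin : (0 < (M : ℝ) ∧ q * (M : ℝ) < β) ∨ ((M : ℝ) < 0 ∧ (n - q) * -(M : ℝ) < β))
    (hng : n * g = β * p - M) (hp : 1 ≤ p) (hq1 : 1 ≤ q) (hqn : q < n)
    (hpq : p * q ≡ 1 [MOD n]) (hC1 : 1 ≤ C) (hCn : C < n) (hA : A ≤ M.natAbs)
    (h : g * C = 1 - Real.sign M * A + β * B) :
    ∃ A B C : ℕ, (A : ℝ) ≤ |(M : ℝ)| ∧ B ≤ p - 1 ∧ 1 ≤ C ∧ C ≤ n - 1 ∧
      g = (1 - Real.sign (M : ℝ) * A + B * β) / C := by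
  obtain ⟨hB0, hBp⟩ := coeff_bounds hwin hng hp hq1 hqn hpq hC1 hCn hA h
  refine ⟨A, B.toNat, C, natCast_le_abs_intCast_iff.2 hA, by omega, hC1, by omega, ?_⟩
  have hB : ((B.toNat : ℕ) : ℝ) = B := by exact_mod_cast Int.toNat_of_nonneg hB0
  rw [eq_div_iff (by positivity), hB]
  linarith

lemma exists_excluded_of_eq {β g ε : ℝ} {n p q A C : ℕ} {M B : ℤ}
    (hwin : (0 < (M : ℝ) ∧ q * (M : ℝ) < β) ∨ ((M : ℝ) < 0 ∧ (n - q) * -(M : ℝ) < β))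
    (hng : n * g = β * p - M) (hp : 1 ≤ p) (hq1 : 1 ≤ q) (hqn : q < n)
    (hpq : p * q ≡ 1 [MOD n]) (hε : ε = 1 ∨ ε = -1) (hC1 : 1 ≤ C) (hCn : C < n)
    (hA : A ≤ M.natAbs) (h : g * C = ε - Real.sign M * A + β * B) :
    ∃ A B C : ℕ, (A : ℝ) ≤ |(M : ℝ)| ∧ B ≤ p - 1 ∧ 1 ≤ C ∧ C ≤ n - 1 ∧
      g = (1 - Real.sign (M : ℝ) * A + B * β) / C := by
  rcases hε with rfl | rfl
  · exact exists_excluded_of_eq_one_sub hwin hng hp hq1 hqn hpq hC1 hCn hA h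
  · have hsM : Real.sign M * M.natAbs = M := by
      rw [Real.sign_intCast, Nat.cast_natAbs]
      exact_mod_cast Int.sign_mul_abs M
    refine exists_excluded_of_eq_one_sub (A := M.natAbs - A) (C := n - C) (B := p - B) hwin hng
      hp hq1 hqn hpq (by omega) (by omega) (Nat.sub_le _ _) ?_
    push_cast [Nat.cast_sub hA, Nat.cast_sub hCn.le]
    linear_combination hng - h + hsM

theorem statement9_general (n p q : ℕ) (α g : ℝ)
    (hn : 2 ≤ n) (hα : 0 < α) (hp1 : 1 ≤ p) (hcop : Nat.Coprime p n)
    (htype : TypeI n p q α g)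
    (Mz : ℤ) (hMz : 2 * π * p / α - n * g = (Mz : ℝ))
    (hexcl : ¬ ∃ A B C : ℕ, (A : ℝ) ≤ |(Mz : ℝ)| ∧ B ≤ p - 1 ∧ 1 ≤ C ∧ C ≤ n - 1 ∧
      g = (1 - Real.sign (2 * π * p / α - n * g) * A + B * (2 * π / α)) / C)
    (ω : ℕ → Fin n → ℝ)
    (hωδ : ∀ j : ℕ, 1 ≤ j → j ≤ n - 1 → ∀ k : ℕ, 1 ≤ k → k ≤ n - 1 →
      inn (aa n p j) (ω k) = if j = k then (1 : ℝ) else 0)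
    (ν : Fin n → ℝ)
    (μ : Fin n → ℝ) (hμ : μ ∈ Lam n |2 * π * p / α - n * g| ω) :
    ∀ j ∈ Icc 1 n, ∀ k ∈ Icc 1 n, j ≠ k → inn (ee n j - ee n k) ν = 1 →
      Real.sin (α * inn (ee n j - ee n k)
        (-(rhoP n p α g ω) - Real.sign (2 * π * p / α - n * g) • (μ + ν)) / 2) ≠ 0 := by
  intro j _ k _ _ haν hsin
  rw [hMz] at hexcl hμ hsin
  have hwin := window_of_typeI htype hMz
  obtain ⟨hq1, hqn, hpq, -⟩ := htype
  obtain ⟨τ, hτ, S, hS, ha⟩ := exists_sub_ee_eq_smul_sum_aa (by omega) hcop j k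
  have hSne : S.Nonempty := nonempty_iff_ne_empty.2 fun h => by
    rw [ha, h, sum_empty, smul_zero, inn_eq_dotProduct, zero_dotProduct] at haν
    exact zero_ne_one haν
  obtain ⟨A, hAM, hA⟩ := exists_inn_sum_aa_eq_of_mem_Lam hωδ hS hμ
  obtain ⟨B, hB⟩ := exists_relation_of_sin_eq_zero hα.ne' hωδ hp1 hS hτ ha hA haν hsin
  have hε : -(Real.sign (Mz : ℝ) * τ) = 1 ∨ -(Real.sign (Mz : ℝ) * τ) = -1 := by
    have hM0 : (Mz : ℝ) ≠ 0 := hwin.elim (fun h => h.1.ne') fun h => h.1.ne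
    rcases Real.sign_apply_eq_of_ne_zero _ hM0 with hs | hs <;>
      rcases hτ with rfl | rfl <;> norm_num [hs]
  have hSn : #S < n := (card_le_card hS).trans_lt (by rw [Nat.card_Icc]; omega)
  exact hexcl (exists_excluded_of_eq hwin (by rw [← hMz]; ring) hp1 hq1 (by omega) hpq hε
    (card_pos.2 hSne) hSn (natCast_le_abs_intCast_iff.1 hAM) hB)

/-- Lemma 2.2, third part: if in addition `g` avoids the finite set of
excluded values, then for `μ ∈ Λ⁺_{p,|M|}` with `μ+ν ∉ Λ⁺_{p,|M|}` all sine denominators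
occurring in `V_ν(g;-ρ_p-sgn(M)(μ+ν))` are nonzero. -/
theorem statement9 (n p q : ℕ) (α g : ℝ)
    (hn : 2 ≤ n) (hα : 0 < α) (hp1 : 1 ≤ p) (hpn : p ≤ n - 1) (hcop : Nat.Coprime p n)
    (htype : TypeI n p q α g)
    (Mz : ℤ) (hMz : 2 * π * p / α - n * g = (Mz : ℝ)) (hMz0 : Mz ≠ 0)
    (hexcl : ¬ ∃ A B C : ℕ, (A : ℝ) ≤ |(Mz : ℝ)| ∧ B ≤ p - 1 ∧ 1 ≤ C ∧ C ≤ n - 1 ∧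
      g = (1 - Real.sign (2 * π * p / α - n * g) * A + B * (2 * π / α)) / C)
    (ω : ℕ → Fin n → ℝ)
    (hωE : ∀ k : ℕ, 1 ≤ k → k ≤ n - 1 → ∑ i, ω k i = 0)
    (hωδ : ∀ j : ℕ, 1 ≤ j → j ≤ n - 1 → ∀ k : ℕ, 1 ≤ k → k ≤ n - 1 →
      inn (aa n p j) (ω k) = if j = k then (1 : ℝ) else 0)
    (r : ℕ) (hr1 : 1 ≤ r) (hrn : r ≤ n - 1)
    (ν : Fin n → ℝ) (hν : inOrbit n r ν)
    (μ : Fin n → ℝ) (hμ : μ ∈ Lam n |2 * π * p / α - n * g| ω)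
    (hμν : μ + ν ∉ Lam n |2 * π * p / α - n * g| ω) :
    ∀ j ∈ Icc 1 n, ∀ k ∈ Icc 1 n, j ≠ k → inn (ee n j - ee n k) ν = 1 →
      Real.sin (α * inn (ee n j - ee n k)
        (-(rhoP n p α g ω) - Real.sign (2 * π * p / α - n * g) • (μ + ν)) / 2) ≠ 0 :=
  statement9_general n p q α g hn hα hp1 hcop htype Mz hMz hexcl ω hωδ ν μ hμ
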